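/- arXiv:1407.4193 — 5 statements merged into one kernel-verified Lean document; each statement's English description precedes it below -/
import Mathlib

section
/- In the root system of type G₂, with α = α₂ and β₁ = 3α₁+2α₂, β₃ = α₁+α₂, the extended α-string through β₁ is {3α₁+2α₂, 3α₁+α₂}, the extended α-string through β₃ is Φ⁺ \ {α₂}, and hence 𝒮̃_α β₁ is a proper subset of 𝒮̃_α β₃. In particular, in type G₂ two distinct extended α-strings need be neither equal nor disjoint. -/
/-- The positive roots of `G₂` realized from the simple roots `α₁`, `α₂`. -/
def G2Pos {V : Type*} [AddCommGroup V] [Module ℚ V] (a1 a2 : V) : Set V :=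
  {a1, a2, a1 + a2, (2 : ℚ) • a1 + a2, (3 : ℚ) • a1 + a2, (3 : ℚ) • a1 + (2 : ℚ) • a2}

/-- The extended `α`-string through `β` relative to a set `Pos` of positive
roots: the elements of `Pos` of the form `lβ + mα`, `l ∈ ℕ, l > 0`, `m ∈ ℤ`. -/
def estr {V : Type*} [AddCommGroup V] [Module ℚ V] (Pos : Set V) (α β : V) : Set V :=
  {x | x ∈ Pos ∧ ∃ l : ℕ, 0 < l ∧ ∃ m : ℤ, x = (l : ℚ) • β + (m : ℚ) • α}

/-- in `G₂`, with `α = α₂`, `β₁ = 3α₁+2α₂` and `β₃ = α₁+α₂`, the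
extended `α`-string through `β₁` is `{3α₁+2α₂, 3α₁+α₂}`, the one through `β₃`
is `Φ⁺ \\ {α₂}`, and the former is a proper subset of the latter. -/
theorem stmt_4 {V : Type*} [AddCommGroup V] [Module ℚ V] (a1 a2 : V)
    (hli : LinearIndependent ℚ ![a1, a2]) :
    estr (G2Pos a1 a2) a2 ((3 : ℚ) • a1 + (2 : ℚ) • a2) =
        ({(3 : ℚ) • a1 + (2 : ℚ) • a2, (3 : ℚ) • a1 + a2} : Set V) ∧
      estr (G2Pos a1 a2) a2 (a1 + a2) = G2Pos a1 a2 \ {a2} ∧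
      estr (G2Pos a1 a2) a2 ((3 : ℚ) • a1 + (2 : ℚ) • a2) ⊂
        estr (G2Pos a1 a2) a2 (a1 + a2) := by
  rw [LinearIndependent.pair_iff] at hli
  have hkey : ∀ p q r s : ℚ, p • a1 + q • a2 = r • a1 + s • a2 → p = r ∧ q = s := by
    intro p q r s h
    have h0 : (p - r) • a1 + (q - s) • a2 = 0 := by
      linear_combination (norm := module) h
    obtain ⟨h1, h2⟩ := hli _ _ h0
    constructor <;> linarith
  have E1 : estr (G2Pos a1 a2) a2 ((3 : ℚ) • a1 + (2 : ℚ) • a2) =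
      ({(3 : ℚ) • a1 + (2 : ℚ) • a2, (3 : ℚ) • a1 + a2} : Set V) := by
    ext x
    simp only [estr, G2Pos, Set.mem_setOf_eq, Set.mem_insert_iff, Set.mem_singleton_iff]
    constructor
    · rintro ⟨hmem, l, hl, m, rfl⟩
      rcases hmem with h | h | h | h | h | h
      · exfalso
        obtain ⟨e1, e2⟩ := hkey (3 * l) (2 * l + m) 1 0
          (by linear_combination (norm := module) h)
        have : 3 * (l : ℤ) = 1 := by exact_mod_cast e1
        omega
      · exfalso
        obtain ⟨e1, e2⟩ := hkey (3 * l) (2 * l + m) 0 1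
          (by linear_combination (norm := module) h)
        have : 3 * (l : ℤ) = 0 := by exact_mod_cast e1
        omega
      · exfalso
        obtain ⟨e1, e2⟩ := hkey (3 * l) (2 * l + m) 1 1
          (by linear_combination (norm := module) h)
        have : 3 * (l : ℤ) = 1 := by exact_mod_cast e1
        omega
      · exfalso
        obtain ⟨e1, e2⟩ := hkey (3 * l) (2 * l + m) 2 1
          (by linear_combination (norm := module) h)
        have : 3 * (l : ℤ) = 2 := by exact_mod_cast e1
        omega
      · exact Or.inr h
      · exact Or.inl h
    · rintro (rfl | rfl)
      · exact ⟨by tauto, 1, one_pos, 0, by push_cast; module⟩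
      · exact ⟨by tauto, 1, one_pos, -1, by push_cast; module⟩
  have E2 : estr (G2Pos a1 a2) a2 (a1 + a2) = G2Pos a1 a2 \ {a2} := by
    ext x
    simp only [estr, G2Pos, Set.mem_setOf_eq, Set.mem_insert_iff, Set.mem_singleton_iff,
      Set.mem_diff]
    constructor
    · rintro ⟨hmem, l, hl, m, rfl⟩
      refine ⟨hmem, fun h => ?_⟩
      obtain ⟨e1, e2⟩ := hkey l (l + m) 0 1 (by linear_combination (norm := module) h)
      have : (l : ℤ) = 0 := by exact_mod_cast e1
      omega
    · rintro ⟨hmem, hne⟩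
      refine ⟨hmem, ?_⟩
      rcases hmem with rfl | rfl | rfl | rfl | rfl | rfl
      · exact ⟨1, one_pos, -1, by push_cast; module⟩
      · exact absurd rfl hne
      · exact ⟨1, one_pos, 0, by push_cast; module⟩
      · exact ⟨2, two_pos, -1, by push_cast; module⟩
      · exact ⟨3, three_pos, -2, by push_cast; module⟩
      · exact ⟨3, three_pos, -1, by push_cast; module⟩
  refine ⟨E1, E2, ?_⟩
  rw [E1, E2]
  constructor
  · rintro x (rfl | rfl)
    · refine ⟨by tauto, fun h => ?_⟩
      obtain ⟨e1, e2⟩ := hkey 3 2 0 1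
        (by linear_combination (norm := module) (Set.mem_singleton_iff.mp h))
      norm_num at e1
    · refine ⟨by tauto, fun h => ?_⟩
      obtain ⟨e1, e2⟩ := hkey 3 1 0 1
        (by linear_combination (norm := module) (Set.mem_singleton_iff.mp h))
      norm_num at e1
  · intro hsub
    have hmem : a1 + a2 ∈ G2Pos a1 a2 \ {a2} := by
      refine ⟨by simp [G2Pos], fun h => ?_⟩
      obtain ⟨e1, e2⟩ := hkey 1 1 0 1
        (by linear_combination (norm := module) (Set.mem_singleton_iff.mp h))
      norm_num at e1
    have := hsub hmem
    rcases this with h | h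
    · obtain ⟨e1, e2⟩ := hkey 1 1 3 2 (by linear_combination (norm := module) h)
      norm_num at e1
    · obtain ⟨e1, e2⟩ := hkey 1 1 3 1
        (by linear_combination (norm := module) (Set.mem_singleton_iff.mp h))
      norm_num at e1
end

section
/- Let Φ be an irreducible root system not of type G₂, and α a simple root. If β₁, β₂ are positive roots distinct from α whose α-strings are both non-isolated, then the extended α-strings through β₁ and β₂ are either equal or disjoint. -/
open scoped BigOperators

/-- An abstract (reduced) root system with a chosen positive system and base,
    over a rational vector space. `Φ` is the set of roots, `Pos` the positive
    roots, `Δ` the simple roots, and `pair β α` is the Cartan pairing `⟨β, α^∨⟩`. -/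
structure RS (V : Type*) [AddCommGroup V] [Module ℚ V] where
  Φ : Finset V
  Pos : Finset V
  Δ : Finset V
  pos_sub : Pos ⊆ Φ
  simple_sub : Δ ⊆ Pos
  zero_not_mem : (0 : V) ∉ Φ
  neg_mem : ∀ β ∈ Φ, -β ∈ Φ
  pos_or_neg : ∀ β ∈ Φ, β ∈ Pos ∨ -β ∈ Pos
  not_both : ∀ β ∈ Pos, -β ∉ Pos
  pair : V → V → ℚ
  pair_self : ∀ α ∈ Φ, pair α α = 2
  pair_linear : ∀ α, IsLinearMap ℚ fun β => pair β α
  pair_int : ∀ α ∈ Φ, ∀ β ∈ Φ, ∃ n : ℤ, pair β α = (n : ℚ)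
  reflect_mem : ∀ α ∈ Φ, ∀ β ∈ Φ, β - pair β α • α ∈ Φ
  reduced : ∀ α ∈ Φ, ∀ c : ℚ, c • α ∈ Φ → c = 1 ∨ c = -1
  pos_comb : ∀ β ∈ Pos, ∃ c : V → ℕ, β = ∑ γ ∈ Δ, (c γ : ℚ) • γ

variable {V : Type*} [AddCommGroup V] [Module ℚ V]

/-- The `α`-string through `β`: the roots of the form `β + kα`, `k ∈ ℤ`. -/
def RS.str (R : RS V) (α β : V) : Set V :=
  {x | x ∈ R.Φ ∧ ∃ k : ℤ, x = β + (k : ℚ) • α}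

/-- The extended `α`-string through `β`: the positive roots of the form
    `lβ + mα` with `l ∈ ℕ, l > 0` and `m ∈ ℤ`. -/
def RS.estr (R : RS V) (α β : V) : Set V :=
  {x | x ∈ R.Pos ∧ ∃ l : ℕ, 0 < l ∧ ∃ m : ℤ, x = (l : ℚ) • β + (m : ℚ) • α}

/-- Irreducibility: no partition into two mutually orthogonal nonempty subsets. -/
def RS.Irred [DecidableEq V] (R : RS V) : Prop :=
  ∀ A B : Finset V, A ∪ B = R.Φ →
    (∀ a ∈ A, ∀ b ∈ B, R.pair a b = 0) → A = ∅ ∨ B = ∅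

/-- Not of type `G₂`: no Cartan integer equals `±3`. -/
def RS.NotG2 (R : RS V) : Prop :=
  ∀ α ∈ R.Φ, ∀ β ∈ R.Φ, R.pair β α ≠ 3 ∧ R.pair β α ≠ -3

open Classical in
/-- The positive roots `Φ_I⁺` lying in the `ℤ`-span of a subset `I` of the base. -/
noncomputable def RS.PosI (R : RS V) (I : Finset V) : Finset V :=
  R.Pos.filter fun x => ∃ c : V → ℤ, x = ∑ γ ∈ I, (c γ : ℚ) • γ

/-!
If the two extended strings share a root `l₁β₁ + m₁α = l₂β₂ + m₂α`, every element of `𝒮̃_α β₁` is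
a positive root `aβ₂ + bα` with `a ∈ ℚ_{>0}`, `b ∈ ℚ`, so it suffices to show that such a root has
`a ∈ {1, 2}` and `b ∈ ℤ`. This is a computation in the plane of `α` and `β = β₂`, done with the
`W`-invariant form `(x, y) = ∑_{γ ∈ Φ} ⟨x, γ^∨⟩ ⟨y, γ^∨⟩`. For independent roots
`⟨u, v^∨⟩⟨v, u^∨⟩ ≤ 2`: Cauchy–Schwarz gives `≤ 4`, the value `4` would make `s_u s_v` a translation
with an infinite orbit of roots, and `3` is excluded by the absence of `G₂`.

The quantity `4 |y⊥|² / |α|²` (with `y⊥` the component orthogonal to `α`) scales by `a²` from `β`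
to `y`, and for a root not orthogonal to `α` it is `1`, `3` or `4`. As `3` is not a rational
square, `a ∈ {1, 2, 1/2}`, and `a = 1/2` would make `β` twice a root. A root `y ⊥ α` is handled
through the Cartan integers of `y` and `β`, which force `⟨β, y^∨⟩ = 2 / a ∈ {1, 2}`. Finally, if
`β ⊥ α`, the non-isolated `α`-string through `β` supplies a root `β + kα` not orthogonal to `α`.
-/

lemma Finset.eq_of_forall_sub_mem {K : Type*} [Field K] [LinearOrder K] [IsStrictOrderedRing K]
    {S : Finset K} (hS : S.Nonempty) {c₁ c₂ : K} (h₁ : ∀ k ∈ S, c₁ - k ∈ S)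
    (h₂ : ∀ k ∈ S, c₂ - k ∈ S) : c₁ = c₂ := by
  have := S.min'_le _ (h₁ _ (S.max'_mem hS))
  have := S.le_max' _ (h₁ _ (S.min'_mem hS))
  have := S.min'_le _ (h₂ _ (S.max'_mem hS))
  have := S.le_max' _ (h₂ _ (S.min'_mem hS))
  linarith

lemma LinearIndependent.pair_smul_add_smul {K M : Type*} [Field K] [AddCommGroup M] [Module K M]
    {x y : M} (h : LinearIndependent K ![x, y]) {a : K} (ha : a ≠ 0) (b : K) :
    LinearIndependent K ![x, a • y + b • x] := by
  simpa [add_comm, ha] using (pair_add_smul_add_smul_iff (x := x) (y := y) 1 0 b a).2 ⟨h, by simpa⟩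

lemma Int.eq_of_mul_pos_of_mul_le_two {P Q : ℤ} (h₀ : 0 < P * Q) (h₂ : P * Q ≤ 2) :
    P = 1 ∧ Q = 1 ∨ P = -1 ∧ Q = -1 ∨ P = 1 ∧ Q = 2 ∨ P = -1 ∧ Q = -2 ∨
      P = 2 ∧ Q = 1 ∨ P = -2 ∧ Q = -1 := by
  have hP : P ≠ 0 := by rintro rfl; simp at h₀
  have hQ : Q ≠ 0 := by rintro rfl; simp at h₀
  have habs : |P| * |Q| ≤ 2 := by rwa [← abs_mul, abs_of_pos h₀]
  obtain ⟨hP₁, hP₂⟩ := abs_le.1 (show |P| ≤ 2 by nlinarith [Int.one_le_abs hQ, abs_nonneg P])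
  obtain ⟨hQ₁, hQ₂⟩ := abs_le.1 (show |Q| ≤ 2 by nlinarith [Int.one_le_abs hP, abs_nonneg Q])
  interval_cases P <;> interval_cases Q <;> omega

lemma Rat.sq_ne_three (q : ℚ) : q ^ 2 ≠ 3 := fun h => by
  obtain ⟨r, hr⟩ := Rat.isSquare_ofNat_iff.1 ⟨q, by rw [← h, sq]⟩
  have : r ≤ 2 := by nlinarith
  interval_cases r <;> omega

lemma Rat.eq_of_sq_mul_eq {a u v : ℚ} (ha : 0 < a) (hu : u = 1 ∨ u = 3 ∨ u = 4)
    (hv : v = 1 ∨ v = 3 ∨ v = 4) (h : a ^ 2 * u = v) :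
    a = 1 ∧ u = v ∨ a = 2 ∧ u = 1 ∧ v = 4 ∨ a = 1 / 2 ∧ u = 4 ∧ v = 1 := by
  rcases hu with rfl | rfl | rfl <;> rcases hv with rfl | rfl | rfl
  · exact Or.inl ⟨by nlinarith, rfl⟩
  · exact absurd (by linarith) (Rat.sq_ne_three a)
  · exact Or.inr (Or.inl ⟨by nlinarith, rfl, rfl⟩)
  · exact absurd (by linear_combination 3 * h) (Rat.sq_ne_three (3 * a))
  · exact Or.inl ⟨by nlinarith, rfl⟩
  · exact absurd (by linear_combination 3 / 4 * h) (Rat.sq_ne_three (3 * a / 2))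
  · exact Or.inr (Or.inr ⟨by nlinarith, rfl, rfl⟩)
  · exact absurd (by linear_combination h) (Rat.sq_ne_three (2 * a))
  · exact Or.inl ⟨by nlinarith, rfl⟩

namespace RS

variable (R : RS V)

def coroot (α : V) : V →ₗ[ℚ] ℚ := IsLinearMap.mk' (R.pair · α) (R.pair_linear α)

@[simp] lemma coroot_apply (α β : V) : R.coroot α β = R.pair β α := rfl

@[simp] lemma pair_add (α x y : V) : R.pair (x + y) α = R.pair x α + R.pair y α :=
  map_add (R.coroot α) x y

@[simp] lemma pair_sub (α x y : V) : R.pair (x - y) α = R.pair x α - R.pair y α :=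
  map_sub (R.coroot α) x y

@[simp] lemma pair_smul (α : V) (c : ℚ) (x : V) : R.pair (c • x) α = c * R.pair x α :=
  map_smul (R.coroot α) c x

def reflection (α : V) : V →ₗ[ℚ] V := LinearMap.id - (R.coroot α).smulRight α

lemma reflection_apply (α x : V) : R.reflection α x = x - R.pair x α • α := rfl

variable {R}

lemma ne_zero_of_mem {α : V} (hα : α ∈ R.Φ) : α ≠ 0 := fun h => R.zero_not_mem (h ▸ hα)

lemma reflection_self {α : V} (hα : α ∈ R.Φ) : R.reflection α α = -α := by
  rw [reflection_apply, R.pair_self α hα]; module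

lemma reflection_reflection {α : V} (hα : α ∈ R.Φ) (x : V) :
    R.reflection α (R.reflection α x) = x := by
  simp only [reflection_apply, pair_sub, pair_smul, R.pair_self α hα]; module

lemma reflection_mem {α x : V} (hα : α ∈ R.Φ) (hx : x ∈ R.Φ) : R.reflection α x ∈ R.Φ :=
  R.reflect_mem α hα x hx

lemma reflection_mem_iff {α : V} (hα : α ∈ R.Φ) (x : V) : R.reflection α x ∈ R.Φ ↔ x ∈ R.Φ :=
  ⟨fun h => reflection_reflection hα x ▸ reflection_mem hα h, reflection_mem hα⟩

lemma two_smul_not_mem {α : V} (hα : α ∈ R.Φ) : (2 : ℚ) • α ∉ R.Φ := fun h => by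
  rcases R.reduced α hα 2 h with h | h <;> norm_num at h

lemma linearIndependent_of_ne {α β : V} (hα : α ∈ R.Φ) (hβ : β ∈ R.Φ) (h₁ : β ≠ α)
    (h₂ : β ≠ -α) : LinearIndependent ℚ ![α, β] := by
  rw [LinearIndependent.pair_iff' (ne_zero_of_mem hα)]
  rintro c rfl
  rcases R.reduced α hα c hβ with rfl | rfl
  · exact h₁ (one_smul _ _)
  · exact h₂ (neg_one_smul _ _)

lemma add_neg_pair_sub_smul_mem {u v : V} (hv : v ∈ R.Φ) {k : ℚ} (h : u + k • v ∈ R.Φ) :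
    u + (-R.pair u v - k) • v ∈ R.Φ := by
  have := reflection_mem hv h
  rwa [reflection_apply, pair_add, pair_smul, R.pair_self v hv,
    show u + k • v - (R.pair u v + k * 2) • v = u + (-R.pair u v - k) • v by module] at this

lemma finite_setOf_add_smul_mem (u : V) {v : V} (hv : v ≠ 0) :
    {k : ℚ | u + k • v ∈ R.Φ}.Finite :=
  R.Φ.finite_toSet.preimage fun _ _ _ _ h => smul_left_injective ℚ hv (add_left_cancel h)

/-- The Cartan integer `⟨u, v^∨⟩` is determined by the `v`-string through `u`, which the reflection
through `-⟨u, v^∨⟩ / 2` maps to itself. -/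
lemma pair_eq_of_forall_add_smul_mem_iff {u v u' v' : V} (hu : u ∈ R.Φ) (hv : v ∈ R.Φ)
    (hv' : v' ∈ R.Φ) (h : ∀ k : ℚ, u + k • v ∈ R.Φ ↔ u' + k • v' ∈ R.Φ) :
    R.pair u v = R.pair u' v' := by
  set S := (finite_setOf_add_smul_mem (R := R) u (ne_zero_of_mem hv)).toFinset
  have hS : ∀ k, k ∈ S ↔ u + k • v ∈ R.Φ := fun k => Set.Finite.mem_toFinset _
  have := Finset.eq_of_forall_sub_mem ⟨0, (hS 0).2 (by simpa using hu)⟩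
    (fun k hk => (hS _).2 (add_neg_pair_sub_smul_mem hv ((hS k).1 hk)))
    (fun k hk => (hS _).2 ((h _).2 (add_neg_pair_sub_smul_mem hv' ((h k).1 ((hS k).1 hk)))))
  linarith

lemma pair_reflection_reflection {δ u v : V} (hδ : δ ∈ R.Φ) (hu : u ∈ R.Φ) (hv : v ∈ R.Φ) :
    R.pair (R.reflection δ u) (R.reflection δ v) = R.pair u v :=
  (pair_eq_of_forall_add_smul_mem_iff hu hv (reflection_mem hδ hv) fun k => by
    rw [← reflection_mem_iff hδ (u + k • v), map_add, map_smul]).symm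

variable (R : RS V)

def form : LinearMap.BilinForm ℚ V := ∑ γ ∈ R.Φ, (R.coroot γ).smulRight (R.coroot γ)

lemma form_apply (x y : V) : R.form x y = ∑ γ ∈ R.Φ, R.pair x γ * R.pair y γ := by
  simp [form, LinearMap.sum_apply]

variable {R}

lemma form_comm (x y : V) : R.form x y = R.form y x := by
  simp only [form_apply, mul_comm]

lemma form_self_nonneg (x : V) : 0 ≤ R.form x x := by
  rw [form_apply]; exact Finset.sum_nonneg fun γ _ => mul_self_nonneg _

lemma form_self_pos {v : V} (hv : v ∈ R.Φ) : 0 < R.form v v := by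
  have := Finset.single_le_sum (f := fun γ => R.pair v γ * R.pair v γ)
    (fun γ _ => mul_self_nonneg _) hv
  rw [← form_apply, R.pair_self v hv] at this
  linarith

lemma form_reflection_reflection {δ x y : V} (hδ : δ ∈ R.Φ) (hx : x ∈ R.Φ) (hy : y ∈ R.Φ) :
    R.form (R.reflection δ x) (R.reflection δ y) = R.form x y := by
  rw [form_apply, form_apply]
  refine (Finset.sum_nbij' (R.reflection δ) (R.reflection δ) (fun γ => reflection_mem hδ)
    (fun γ => reflection_mem hδ) (fun γ _ => reflection_reflection hδ γ)
    (fun γ _ => reflection_reflection hδ γ) fun γ hγ => ?_).symm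
  rw [pair_reflection_reflection hδ hx hγ, pair_reflection_reflection hδ hy hγ]

lemma form_mul_pair {u v : V} (hu : u ∈ R.Φ) (hv : v ∈ R.Φ) :
    R.form v v * R.pair u v = 2 * R.form u v := by
  have := form_reflection_reflection hv hu hv
  rw [reflection_self hv, reflection_apply] at this
  simp only [map_neg, map_sub, map_smul, LinearMap.sub_apply, LinearMap.smul_apply,
    smul_eq_mul] at this
  linarith

lemma form_mul_pair_comm {u v : V} (hu : u ∈ R.Φ) (hv : v ∈ R.Φ) :
    R.form u u * R.pair v u = R.form v v * R.pair u v := by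
  rw [form_mul_pair hv hu, form_mul_pair hu hv, form_comm]

lemma pair_mul_pair_nonneg {u v : V} (hu : u ∈ R.Φ) (hv : v ∈ R.Φ) :
    0 ≤ R.pair u v * R.pair v u := by
  have key : R.pair u v * R.pair v u * R.form u u = R.form v v * R.pair u v ^ 2 := by
    linear_combination R.pair u v * form_mul_pair_comm hu hv
  have := form_self_pos hu
  have := form_self_pos hv
  nlinarith [sq_nonneg (R.pair u v)]

lemma pair_mul_pair_le_four {u v : V} (hu : u ∈ R.Φ) (hv : v ∈ R.Φ) :
    R.pair u v * R.pair v u ≤ 4 := by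
  have hcs := R.form.apply_sq_le_of_symm form_self_nonneg
    (LinearMap.isSymm_def.2 fun x y => form_comm x y) u v
  have key : R.pair u v * R.pair v u * (R.form u u * R.form v v) = 4 * R.form u v ^ 2 := by
    linear_combination (R.form u u * R.pair v u) * form_mul_pair hu hv
      + 2 * R.form u v * form_mul_pair hv hu + 4 * R.form u v * form_comm v u
  have := mul_pos (form_self_pos hu) (form_self_pos hv)
  nlinarith

/-- If `⟨u, v^∨⟩⟨v, u^∨⟩ = 4`, both reflections fix `d = 2u - ⟨u, v^∨⟩v`, and `s_u s_v` translates
`u` by `d`: infinitely many roots. -/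
lemma pair_mul_pair_ne_four {u v : V} (hu : u ∈ R.Φ) (hv : v ∈ R.Φ)
    (hlin : LinearIndependent ℚ ![u, v]) : R.pair u v * R.pair v u ≠ 4 := by
  intro h
  set d := (2 : ℚ) • u - R.pair u v • v with hd
  have hd0 : d ≠ 0 := fun h0 => by
    have := (LinearIndependent.pair_iff.1 hlin) 2 (-R.pair u v) (by rw [← h0, hd]; module)
    norm_num at this
  have hmem : ∀ k : ℕ, u + (k : ℚ) • d ∈ R.Φ := by
    intro k
    induction k with
    | zero => simpa using hu
    | succ k ih =>
      have := reflection_mem hu (reflection_mem hv ih)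
      simp only [reflection_apply, hd, pair_add, pair_sub, pair_smul, R.pair_self u hu,
        R.pair_self v hv] at this
      convert this using 1
      push_cast
      linear_combination (norm := module) (-1 - (k : ℚ)) • h • u
  have hinj : Function.Injective fun k : ℕ => u + (k : ℚ) • d := fun k l hkl => by
    have := smul_left_injective ℚ hd0 (add_left_cancel hkl)
    exact_mod_cast this
  exact Set.infinite_of_injective_forall_mem hinj hmem R.Φ.finite_toSet

lemma pair_mul_pair_le_two (hG2 : R.NotG2) {u v : V} (hu : u ∈ R.Φ) (hv : v ∈ R.Φ)
    (hlin : LinearIndependent ℚ ![u, v]) : R.pair u v * R.pair v u ≤ 2 := by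
  obtain ⟨n, hn⟩ := R.pair_int v hv u hu
  obtain ⟨n', hn'⟩ := R.pair_int u hu v hv
  have h₀ := pair_mul_pair_nonneg hu hv
  have h₄ := pair_mul_pair_le_four hu hv
  have hne₄ := pair_mul_pair_ne_four hu hv hlin
  have hG := hG2 v hv u hu
  have hG' := hG2 u hu v hv
  rw [hn] at hG; rw [hn'] at hG'
  norm_cast at hG hG'
  have hne₃ : n * n' ≠ 3 := fun h3 => by
    have hdvd : n.natAbs ∣ 3 := by simpa using Int.natAbs_dvd_natAbs.2 (Dvd.intro n' h3)
    rcases (Nat.dvd_prime Nat.prime_three).1 hdvd with h | h <;>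
      rcases Int.natAbs_eq n with e | e <;> rw [h] at e <;> subst e <;> omega
  rw [hn, hn'] at h₀ h₄ hne₄ ⊢
  norm_cast at h₀ h₄ hne₄ ⊢
  omega

variable (R : RS V)

/-- `4 |z⊥|² / |α|²`, where `z⊥` is the component of `z` orthogonal to `α`. -/
def perpSq (α z : V) : ℚ := 4 * R.form z z / R.form α α - R.pair z α ^ 2

variable {R}

lemma perpSq_smul_add_smul {α β : V} (hα : α ∈ R.Φ) (hβ : β ∈ R.Φ) (t s : ℚ) :
    R.perpSq α (t • β + s • α) = t ^ 2 * R.perpSq α β := by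
  have hA := (form_self_pos hα).ne'
  have h := form_mul_pair hβ hα
  simp only [perpSq, map_add, map_smul, LinearMap.add_apply, LinearMap.smul_apply, smul_eq_mul,
    pair_add, pair_smul, R.pair_self α hα, form_comm α β]
  field_simp
  linear_combination (-4 * t * s) * h

lemma perpSq_cases (hG2 : R.NotG2) {α z : V} (hα : α ∈ R.Φ) (hz : z ∈ R.Φ)
    (hlin : LinearIndependent ℚ ![α, z]) (hp : R.pair z α ≠ 0) :
    R.pair z α ^ 2 = 1 ∧ (R.perpSq α z = 1 ∨ R.perpSq α z = 3) ∨
      R.pair z α ^ 2 = 4 ∧ R.perpSq α z = 4 := by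
  obtain ⟨P, hP⟩ := R.pair_int α hα z hz
  obtain ⟨Q, hQ⟩ := R.pair_int z hz α hα
  have hA := form_self_pos hα
  have hN := form_mul_pair_comm hz hα
  have h₂ := pair_mul_pair_le_two hG2 hz hα (LinearIndependent.pair_symm_iff.1 hlin)
  have h₀ : 0 < R.pair z α * R.pair α z := by
    refine lt_of_le_of_ne (pair_mul_pair_nonneg hz hα) (Ne.symm (mul_ne_zero hp fun hq => ?_))
    rw [hq, mul_zero] at hN
    exact hp ((mul_eq_zero.1 hN.symm).resolve_left hA.ne')
  rw [hP, hQ] at h₀ h₂ hN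
  rw [hP]
  norm_cast at h₀ h₂
  have hN' : R.form z z = R.form α α * P / Q := by
    rw [eq_div_iff (by exact_mod_cast (show Q ≠ 0 by rintro rfl; simp at h₀))]; exact hN
  simp only [perpSq, hN', hP]
  rcases Int.eq_of_mul_pos_of_mul_le_two h₀ h₂ with ⟨rfl, rfl⟩ | ⟨rfl, rfl⟩ | ⟨rfl, rfl⟩ |
    ⟨rfl, rfl⟩ | ⟨rfl, rfl⟩ | ⟨rfl, rfl⟩ <;> field_simp <;> norm_num

lemma coeffs_of_mem_of_pair_eq_zero (hG2 : R.NotG2) {α β : V} (hα : α ∈ R.Φ)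
    (hβ : β ∈ R.Φ) (hlin : LinearIndependent ℚ ![α, β]) {a b : ℚ} (hy : a • β + b • α ∈ R.Φ)
    (ha : 0 < a) (hyα : R.pair (a • β + b • α) α = 0) : (a = 1 ∨ a = 2) ∧ ∃ m : ℤ, b = m := by
  by_cases hb : b = 0
  · subst hb
    rw [zero_smul, add_zero] at hy
    rcases R.reduced β hβ a hy with rfl | rfl
    · exact ⟨Or.inl rfl, 0, by simp⟩
    · norm_num at ha
  set y := a • β + b • α with hydef
  have hlin' : LinearIndependent ℚ ![y, β] := LinearIndependent.pair_symm_iff.1 <| by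
    simpa [hydef, add_comm] using
      (LinearIndependent.pair_symm_iff.1 hlin).pair_smul_add_smul hb a
  have hyα' : R.form y α = 0 := by
    have := form_mul_pair hy hα
    rw [hyα, mul_zero] at this
    linarith
  have hN : R.form y y = a * R.form y β := by
    conv_lhs => rw [hydef]
    rw [map_add, map_smul, map_smul, ← hydef, hyα', smul_eq_mul, smul_eq_mul, mul_zero, add_zero]
  -- `⟨β, y^∨⟩ = 2 (y, β) / (y, y) = 2 / a`
  have haM' : a * R.pair β y = 2 := by
    have hB : R.form y β ≠ 0 := fun h => by
      rw [h, mul_zero] at hN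
      exact (form_self_pos hy).ne' hN
    refine mul_left_cancel₀ hB ?_
    linear_combination 2 * form_comm β y + form_mul_pair hβ hy - R.pair β y * hN
  have hM'pos : 0 < R.pair β y := (pos_iff_pos_of_mul_pos (haM' ▸ two_pos)).1 ha
  have hMpos : 0 < R.pair y β :=
    (pos_iff_pos_of_mul_pos ((form_mul_pair_comm hy hβ) ▸
      mul_pos (form_self_pos hy) hM'pos)).1 (form_self_pos hβ)
  have hle := pair_mul_pair_le_two hG2 hy hβ hlin'
  obtain ⟨M, hM⟩ := R.pair_int β hβ y hy
  obtain ⟨M', hM'⟩ := R.pair_int y hy β hβ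
  rw [hM, hM'] at hle
  rw [hM] at hMpos
  rw [hM'] at hM'pos haM'
  norm_cast at hle hMpos hM'pos
  have : M' ≤ 2 := by nlinarith
  interval_cases M' <;> norm_num at haM'
  · obtain ⟨n, hn⟩ := R.pair_int α hα β hβ
    simp only [hydef, pair_add, pair_smul, R.pair_self α hα, hn] at hyα
    subst haM'
    exact ⟨Or.inr rfl, -n, by push_cast; linarith⟩
  · subst haM'
    have := reflection_mem hβ hy
    rw [reflection_apply, hM, show M = 1 by omega, hydef] at this
    rcases R.reduced α hα b (by convert this using 1; push_cast; module) with rfl | rfl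
    · exact ⟨Or.inl rfl, 1, by simp⟩
    · exact ⟨Or.inl rfl, -1, by simp⟩

lemma coeffs_of_mem_of_pair_ne_zero (hG2 : R.NotG2) {α β : V} (hα : α ∈ R.Φ)
    (hβ : β ∈ R.Φ) (hlin : LinearIndependent ℚ ![α, β]) {a b : ℚ} (hy : a • β + b • α ∈ R.Φ)
    (ha : 0 < a)     (hβα : R.pair β α ≠ 0) (hyα : R.pair (a • β + b • α) α ≠ 0) :
    (a = 1 ∨ a = 2) ∧ ∃ m : ℤ, b = m := by
  set y := a • β + b • α with hydef
  obtain ⟨n, hn⟩ := R.pair_int α hα β hβ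
  have hpy : R.pair y α = a * n + 2 * b := by
    rw [hydef, pair_add, pair_smul, pair_smul, R.pair_self α hα, hn]; ring
  have hcβ := perpSq_cases hG2 hα hβ hlin hβα
  have hcy := perpSq_cases hG2 hα hy (hlin.pair_smul_add_smul ha.ne' b) hyα
  have key := Rat.eq_of_sq_mul_eq (u := R.perpSq α β) (v := R.perpSq α y) ha
    (by rcases hcβ with ⟨-, h | h⟩ | ⟨-, h⟩ <;> simp [h])
    (by rcases hcy with ⟨-, h | h⟩ | ⟨-, h⟩ <;> simp [h])
    (perpSq_smul_add_smul hα hβ a b).symm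
  rw [hn] at hcβ
  rcases key with ⟨rfl, hδ⟩ | ⟨rfl, hδβ, hδy⟩ | ⟨rfl, hδβ, hδy⟩
  · have hsq : R.pair y α ^ 2 = (n : ℚ) ^ 2 := by
      rcases hcβ with ⟨h₁, h₂ | h₂⟩ | ⟨h₁, h₂⟩ <;>
        rcases hcy with ⟨h₃, h₄ | h₄⟩ | ⟨h₃, h₄⟩ <;> linarith
    refine ⟨Or.inl rfl, ?_⟩
    rcases sq_eq_sq_iff_eq_or_eq_neg.1 hsq with h | h
    · exact ⟨0, by push_cast; linarith⟩
    · exact ⟨-n, by push_cast; linarith⟩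
  · have hsq : R.pair y α ^ 2 = 2 ^ 2 := by
      rcases hcy with ⟨h₃, h₄ | h₄⟩ | ⟨h₃, h₄⟩ <;> linarith
    refine ⟨Or.inr rfl, ?_⟩
    rcases sq_eq_sq_iff_eq_or_eq_neg.1 hsq with h | h
    · exact ⟨1 - n, by push_cast; linarith⟩
    · exact ⟨-1 - n, by push_cast; linarith⟩
  · -- `β` would be twice the root `y` or `s_α y`
    exfalso
    have hsq : R.pair y α ^ 2 = ((n : ℚ) / 2) ^ 2 := by
      rcases hcβ with ⟨h₁, h₂ | h₂⟩ | ⟨h₁, h₂⟩ <;>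
        rcases hcy with ⟨h₃, h₄ | h₄⟩ | ⟨h₃, h₄⟩ <;> linarith
    have hβy : β = (2 : ℚ) • y - (2 * b) • α := by rw [hydef]; module
    rcases sq_eq_sq_iff_eq_or_eq_neg.1 hsq with h | h
    · apply two_smul_not_mem hy
      convert hβ using 1
      rw [hβy, show b = 0 by linarith]
      module
    · apply two_smul_not_mem (reflection_mem hα hy)
      convert hβ using 1
      rw [hβy, reflection_apply, show b = R.pair y α by linarith]
      module

lemma coeffs_of_mem (hG2 : R.NotG2) {α β : V} (hα : α ∈ R.Φ) (hβ : β ∈ R.Φ)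
    (hlin : LinearIndependent ℚ ![α, β]) (hni : ∃ k : ℤ, k ≠ 0 ∧ β + (k : ℚ) • α ∈ R.Φ)
    {a b : ℚ} (hy : a • β + b • α ∈ R.Φ) (ha : 0 < a) : (a = 1 ∨ a = 2) ∧ ∃ m : ℤ, b = m := by
  by_cases hyα : R.pair (a • β + b • α) α = 0
  · exact coeffs_of_mem_of_pair_eq_zero hG2 hα hβ hlin hy ha hyα
  by_cases hβα : R.pair β α ≠ 0
  · exact coeffs_of_mem_of_pair_ne_zero hG2 hα hβ hlin hy ha hβα hyα
  -- `β ⊥ α`: pass to the root `β + kα` of the `α`-string, which is not orthogonal to `α`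
  obtain ⟨k, hk, hw⟩ := hni
  have hwα : R.pair (β + (k : ℚ) • α) α ≠ 0 := by
    rw [pair_add, pair_smul, not_not.1 hβα, R.pair_self α hα]
    exact_mod_cast (by omega : 0 + k * 2 ≠ 0)
  have hwlin : LinearIndependent ℚ ![α, β + (k : ℚ) • α] := by
    simpa using hlin.pair_smul_add_smul one_ne_zero k
  have hyw : a • (β + (k : ℚ) • α) + (b - a * k) • α = a • β + b • α := by module
  obtain ⟨ha', m, hm⟩ :=
    coeffs_of_mem_of_pair_ne_zero hG2 hα hw hwlin (hyw ▸ hy) ha hwα (hyw ▸ hyα)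
  refine ⟨ha', ?_⟩
  rcases ha' with rfl | rfl
  · exact ⟨m + k, by push_cast; linarith⟩
  · exact ⟨m + 2 * k, by push_cast; linarith⟩

lemma exists_add_zsmul_mem_of_mem_str {α β : V} (h : ∃ x ∈ R.str α β, x ≠ β) :
    ∃ k : ℤ, k ≠ 0 ∧ β + (k : ℚ) • α ∈ R.Φ := by
  obtain ⟨x, ⟨hx, k, rfl⟩, hne⟩ := h
  exact ⟨k, by rintro rfl; simp at hne, hx⟩

lemma mem_estr_of_eq_smul_add_smul (hG2 : R.NotG2) {α β : V} (hα : α ∈ R.Φ) (hβ : β ∈ R.Φ)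
    (hlin : LinearIndependent ℚ ![α, β]) (hni : ∃ k : ℤ, k ≠ 0 ∧ β + (k : ℚ) • α ∈ R.Φ)
    {y : V} (hy : y ∈ R.Pos) {a b : ℚ} (ha : 0 < a) (hyab : y = a • β + b • α) :
    y ∈ R.estr α β := by
  obtain ⟨ha', m, rfl⟩ := coeffs_of_mem hG2 hα hβ hlin hni (hyab ▸ R.pos_sub hy) ha
  refine ⟨hy, ?_⟩
  rcases ha' with rfl | rfl
  · exact ⟨1, one_pos, m, by simpa using hyab⟩
  · exact ⟨2, two_pos, m, by simpa using hyab⟩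

lemma estr_subset_of_mem_of_mem (hG2 : R.NotG2) {α β γ x : V} (hα : α ∈ R.Pos)
    (hβ : β ∈ R.Pos) (hβα : β ≠ α) (hni : ∃ x ∈ R.str α β, x ≠ β) (hxγ : x ∈ R.estr α γ)
    (hxβ : x ∈ R.estr α β) : R.estr α γ ⊆ R.estr α β := by
  have hlin := linearIndependent_of_ne (R.pos_sub hα) (R.pos_sub hβ) hβα
    fun h => R.not_both α hα (h ▸ hβ)
  obtain ⟨-, l₁, hl₁, m₁, hx₁⟩ := hxγ
  obtain ⟨-, l₂, hl₂, m₂, hx₂⟩ := hxβ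
  have hγ : γ = (l₁ : ℚ)⁻¹ • ((l₂ : ℚ) • β + ((m₂ : ℚ) - m₁) • α) :=
    (eq_inv_smul_iff₀ (by positivity)).2 (by linear_combination (norm := module) hx₂ - hx₁)
  rintro y ⟨hy, l, hl, m, rfl⟩
  refine mem_estr_of_eq_smul_add_smul hG2 (R.pos_sub hα) (R.pos_sub hβ) hlin
    (exists_add_zsmul_mem_of_mem_str hni) hy (a := l * (l₁ : ℚ)⁻¹ * l₂)
    (b := l * (l₁ : ℚ)⁻¹ * ((m₂ : ℚ) - m₁) + m) (by positivity) ?_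
  rw [hγ]
  module

end RS

theorem stmt_5_general (R : RS V) (hG2 : R.NotG2)
    (α β₁ β₂ : V) (hα : α ∈ R.Δ)
    (hβ₁ : β₁ ∈ R.Pos) (hne₁ : β₁ ≠ α) (hni₁ : ∃ x ∈ R.str α β₁, x ≠ β₁)
    (hβ₂ : β₂ ∈ R.Pos) (hne₂ : β₂ ≠ α) (hni₂ : ∃ x ∈ R.str α β₂, x ≠ β₂) :
    R.estr α β₁ = R.estr α β₂ ∨ Disjoint (R.estr α β₁) (R.estr α β₂) := by
  have hα' := R.simple_sub hα
  by_cases h : ∃ x, x ∈ R.estr α β₁ ∧ x ∈ R.estr α β₂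
  · obtain ⟨x, hx₁, hx₂⟩ := h
    exact Or.inl ((R.estr_subset_of_mem_of_mem hG2 hα' hβ₂ hne₂ hni₂ hx₁ hx₂).antisymm
      (R.estr_subset_of_mem_of_mem hG2 hα' hβ₁ hne₁ hni₁ hx₂ hx₁))
  · exact Or.inr (Set.disjoint_left.2 fun x hx₁ hx₂ => h ⟨x, hx₁, hx₂⟩)

/-- in an irreducible root system not of type `G₂`, two extended
`α`-strings through positive roots with non-isolated `α`-strings are either
equal or disjoint. -/
theorem stmt_5 [DecidableEq V] (R : RS V) (hirr : R.Irred) (hG2 : R.NotG2)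
    (α β₁ β₂ : V) (hα : α ∈ R.Δ)
    (hβ₁ : β₁ ∈ R.Pos) (hne₁ : β₁ ≠ α) (hni₁ : ∃ x ∈ R.str α β₁, x ≠ β₁)
    (hβ₂ : β₂ ∈ R.Pos) (hne₂ : β₂ ≠ α) (hni₂ : ∃ x ∈ R.str α β₂, x ≠ β₂) :
    R.estr α β₁ = R.estr α β₂ ∨ Disjoint (R.estr α β₁) (R.estr α β₂) :=
  stmt_5_general R hG2 α β₁ β₂ hα hβ₁ hne₁ hni₁ hβ₂ hne₂ hni₂
end

section
/- Let 𝔰 be a finite-dimensional nilpotent restricted Lie algebra over a field of characteristic p > 0 with basis f_{α₁},…,f_{α_m} indexed by a closed set of positive roots 𝔖, graded by height. Fix an ordering (α₁,…,α_m) of 𝔖 and an index k with ht(α_k) = h. If in a PBW monomial f_{α₁}^{i₁}⋯f_{α_m}^{i_m} ∈ u(𝔰) all exponents i_j with ht(α_j) ≥ h equal p−1, then inserting the factor f_{α_k} anywhere into this product yields 0 in u(𝔰). -/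
namespace Stmt10Aux

variable {F A V : Type*} [Field F] [Ring A] [Algebra F A]
  [AddCommGroup V] [DecidableEq V]

/-- truncated weight: height if at least `h`, else `0`. -/
def wt (ht : V → ℕ) (h : ℕ) (δ : V) : ℕ := if h ≤ ht δ then ht δ else 0

/-- total truncated weight of a word. -/
def Phi (ht : V → ℕ) (h : ℕ) (W : List V) : ℕ := (W.map (wt ht h)).sum

@[simp] lemma Phi_nil (ht : V → ℕ) (h : ℕ) : Phi ht h ([] : List V) = 0 := rfl

@[simp] lemma Phi_cons (ht : V → ℕ) (h : ℕ) (δ : V) (W : List V) :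
    Phi ht h (δ :: W) = wt ht h δ + Phi ht h W := by
  simp [Phi]

@[simp] lemma Phi_append (ht : V → ℕ) (h : ℕ) (X Y : List V) :
    Phi ht h (X ++ Y) = Phi ht h X + Phi ht h Y := by
  simp [Phi]

lemma wt_add {S : Finset V} {ht : V → ℕ} {h : ℕ}
    (hht : ∀ α ∈ S, 0 < ht α)
    (hadd : ∀ α ∈ S, ∀ β ∈ S, α + β ∈ S → ht (α + β) = ht α + ht β)
    {β γ : V} (hβ : β ∈ S) (hγ : γ ∈ S) (hm : β + γ ∈ S) :
    wt ht h β + wt ht h γ ≤ wt ht h (β + γ) := by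
  have h1 := hht β hβ
  have h2 := hht γ hγ
  have h3 := hadd β hβ γ hγ hm
  unfold wt
  split_ifs <;> omega

variable {S : Finset V} {f : V → A} {ht : V → ℕ}

/-- Move a letter `γ` leftwards across `U`, inside context `P … Z`; error
terms are strictly shorter words with `Phi` at least as large, killed by `H0`. -/
lemma move {h t n₀ : ℕ}
    (hht : ∀ α ∈ S, 0 < ht α)
    (hadd : ∀ α ∈ S, ∀ β ∈ S, α + β ∈ S → ht (α + β) = ht α + ht β)
    (hbr : ∀ α ∈ S, ∀ β ∈ S,
      (α + β ∈ S → ∃ c : F, f α * f β - f β * f α = c • f (α + β)) ∧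
      (α + β ∉ S → f α * f β = f β * f α))
    (H0 : ∀ W : List V, W.length < n₀ → (∀ δ ∈ W, δ ∈ S) → t ≤ Phi ht h W →
      (W.map f).prod = 0) :
    ∀ (U P Z : List V) (γ : V), γ ∈ S → (∀ δ ∈ P, δ ∈ S) → (∀ δ ∈ U, δ ∈ S) →
      (∀ δ ∈ Z, δ ∈ S) → (P ++ U ++ γ :: Z).length ≤ n₀ →
      t ≤ Phi ht h (P ++ U ++ γ :: Z) →
      ((P ++ U ++ γ :: Z).map f).prod = ((P ++ γ :: (U ++ Z)).map f).prod := by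
  intro U
  induction U using List.reverseRecOn with
  | nil => intro P Z γ _ _ _ _ _ _; simp
  | append_singleton U₀ β IH =>
    intro P Z γ hγ hP hU hZ hlen hPhi
    have hβ : β ∈ S := hU β (by simp)
    have hU₀ : ∀ δ ∈ U₀, δ ∈ S := fun δ hδ => hU δ (by simp [hδ])
    set a : A := ((P ++ U₀).map f).prod with ha
    set b : A := (Z.map f).prod with hb
    have L1 : ((P ++ (U₀ ++ [β]) ++ γ :: Z).map f).prod = a * (f β * (f γ * b)) := by
      simp [ha, hb, mul_assoc]
    have key : a * (f γ * (f β * b)) = ((P ++ γ :: (U₀ ++ [β] ++ Z)).map f).prod := by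
      have e2 : ((P ++ U₀ ++ γ :: (β :: Z)).map f).prod = a * (f γ * (f β * b)) := by
        simp [ha, hb, mul_assoc]
      rw [← e2]
      have := IH P (β :: Z) γ hγ hP hU₀
        (by intro δ hδ; rcases List.mem_cons.mp hδ with h' | h'
            · exact h' ▸ hβ
            · exact hZ δ h')
        (by simp at hlen ⊢; omega)
        (by simp at hPhi ⊢; omega)
      rw [this]
      congr 1
      simp
    by_cases hm : β + γ ∈ S
    · obtain ⟨c, hc⟩ := (hbr β hβ γ hγ).1 hm
      have hswap : f β * f γ = f γ * f β + c • f (β + γ) := by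
        rw [← hc]; abel
      have hz : (((P ++ U₀) ++ (β + γ) :: Z).map f).prod = 0 := by
        apply H0
        · simp at hlen ⊢; omega
        · intro δ hδ
          simp only [List.mem_append, List.mem_cons] at hδ
          rcases hδ with (h' | h') | h' | h'
          · exact hP δ h'
          · exact hU₀ δ h'
          · exact h' ▸ hm
          · exact hZ δ h'
        · have hw := wt_add (h := h) hht hadd hβ hγ hm
          simp at hPhi ⊢; omega
      have hz' : a * (f (β + γ) * b) = 0 := by
        have : (((P ++ U₀) ++ (β + γ) :: Z).map f).prod = a * (f (β + γ) * b) := by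
          simp [ha, hb, mul_assoc]
        rw [← this, hz]
      rw [L1, ← key]
      have : f β * (f γ * b) = f γ * (f β * b) + f (β + γ) * (c • b) := by
        rw [← mul_assoc, hswap, add_mul, mul_assoc, smul_mul_assoc, mul_smul_comm]
      rw [this, mul_add]
      have : a * (f (β + γ) * (c • b)) = c • (a * (f (β + γ) * b)) := by
        rw [mul_smul_comm, mul_smul_comm]
      rw [this, hz', smul_zero, add_zero]
    · have hswap : f β * f γ = f γ * f β := (hbr β hβ γ hγ).2 hm
      rw [L1, ← key]
      have : f β * (f γ * b) = f γ * (f β * b) := by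
        rw [← mul_assoc, hswap, mul_assoc]
      rw [this]

/-- Gather `k` copies of `α` at the front of `W` (after context `P`). -/
lemma gather {h t n₀ : ℕ}
    (hht : ∀ α ∈ S, 0 < ht α)
    (hadd : ∀ α ∈ S, ∀ β ∈ S, α + β ∈ S → ht (α + β) = ht α + ht β)
    (hbr : ∀ α ∈ S, ∀ β ∈ S,
      (α + β ∈ S → ∃ c : F, f α * f β - f β * f α = c • f (α + β)) ∧
      (α + β ∉ S → f α * f β = f β * f α))
    (H0 : ∀ W : List V, W.length < n₀ → (∀ δ ∈ W, δ ∈ S) → t ≤ Phi ht h W →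
      (W.map f).prod = 0) :
    ∀ (k : ℕ) (α : V) (P W : List V), α ∈ S → (∀ δ ∈ P, δ ∈ S) → (∀ δ ∈ W, δ ∈ S) →
      k ≤ W.count α → (P ++ W).length ≤ n₀ → t ≤ Phi ht h (P ++ W) →
      ∃ W' : List V, W.Perm (List.replicate k α ++ W') ∧
        ((P ++ W).map f).prod = ((P ++ (List.replicate k α ++ W')).map f).prod := by
  intro k
  induction k with
  | zero => intro α P W _ _ _ _ _ _; exact ⟨W, by simp, by simp⟩
  | succ k IHk =>
    intro α P W hα hP hW hcount hlen hPhi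
    have hmem : α ∈ W := List.count_pos_iff.mp (by omega)
    obtain ⟨X, Y, rfl⟩ := List.append_of_mem hmem
    have hX : ∀ δ ∈ X, δ ∈ S := fun δ hδ => hW δ (by simp [hδ])
    have hY : ∀ δ ∈ Y, δ ∈ S := fun δ hδ => hW δ (by simp [hδ])
    have hmove : ((P ++ X ++ α :: Y).map f).prod = ((P ++ α :: (X ++ Y)).map f).prod :=
      move hht hadd hbr H0 X P Y α hα hP hX hY
        (by simp at hlen ⊢; omega) (by simp at hPhi ⊢; omega)
    have hcount' : k ≤ (X ++ Y).count α := by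
      simp [List.count_append, List.count_cons] at hcount ⊢
      omega
    obtain ⟨W', hperm, hprod⟩ := IHk α (P ++ [α]) (X ++ Y) hα
      (by intro δ hδ; rcases List.mem_append.mp hδ with h' | h'
          · exact hP δ h'
          · simp at h'; exact h' ▸ hα)
      (by intro δ hδ; rcases List.mem_append.mp hδ with h' | h'
          · exact hX δ h'
          · exact hY δ h')
      hcount'
      (by simp at hlen ⊢; omega)
      (by simp at hPhi ⊢; omega)
    refine ⟨W', ?_, ?_⟩
    · rw [List.replicate_succ, List.cons_append]
      exact List.perm_middle.trans (hperm.cons α)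
    · calc ((P ++ (X ++ α :: Y)).map f).prod
          = ((P ++ X ++ α :: Y).map f).prod := by rw [List.append_assoc]
        _ = ((P ++ α :: (X ++ Y)).map f).prod := hmove
        _ = (((P ++ [α]) ++ (X ++ Y)).map f).prod := by simp
        _ = (((P ++ [α]) ++ (List.replicate k α ++ W')).map f).prod := hprod
        _ = ((P ++ (List.replicate (k + 1) α ++ W')).map f).prod := by
            simp [List.replicate_succ]

/-- Main lemma: any word over `S` whose truncated weight exceeds
`N = ∑_{α ∈ S} (p-1)·wt α` is zero. -/
lemma main {p h : ℕ} (hp : p.Prime)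
    (hht : ∀ α ∈ S, 0 < ht α)
    (hadd : ∀ α ∈ S, ∀ β ∈ S, α + β ∈ S → ht (α + β) = ht α + ht β)
    (hpow : ∀ α ∈ S, f α ^ p = 0)
    (hbr : ∀ α ∈ S, ∀ β ∈ S,
      (α + β ∈ S → ∃ c : F, f α * f β - f β * f α = c • f (α + β)) ∧
      (α + β ∉ S → f α * f β = f β * f α)) :
    ∀ (n : ℕ) (W : List V), W.length ≤ n → (∀ δ ∈ W, δ ∈ S) →
      (∑ α ∈ S, (p - 1) * wt ht h α) < Phi ht h W → (W.map f).prod = 0 := by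
  intro n
  induction n with
  | zero =>
    intro W hl _ hN
    have : W = [] := List.eq_nil_of_length_eq_zero (Nat.le_zero.mp hl)
    subst this
    simp at hN
  | succ n IH =>
    intro W hlen hWS hN
    by_cases hex : ∃ α ∈ S, h ≤ ht α ∧ p ≤ W.count α
    · obtain ⟨α, hαS, hhα, hcnt⟩ := hex
      have H0 : ∀ W' : List V, W'.length < W.length → (∀ δ ∈ W', δ ∈ S) →
          Phi ht h W ≤ Phi ht h W' → (W'.map f).prod = 0 := by
        intro W' h1 h2 h3
        exact IH W' (by omega) h2 (lt_of_lt_of_le hN h3)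
      obtain ⟨W', _, hprod⟩ := gather hht hadd hbr H0 p α [] W hαS (by simp) hWS hcnt
        (by simp) (by simp)
      simp only [List.nil_append] at hprod
      rw [hprod]
      simp [List.prod_replicate, hpow α hαS]
    · exfalso
      push_neg at hex
      have hb : Phi ht h W ≤ ∑ α ∈ S, (p - 1) * wt ht h α := by
        have e1 : Phi ht h W = ∑ x ∈ W.toFinset, W.count x • wt ht h x :=
          Finset.sum_list_map_count W (wt ht h)
        rw [e1]
        calc ∑ x ∈ W.toFinset, W.count x • wt ht h x
            ≤ ∑ x ∈ W.toFinset, (p - 1) * wt ht h x := by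
              apply Finset.sum_le_sum
              intro x hx
              have hxS := hWS x (List.mem_toFinset.mp hx)
              by_cases hhx : h ≤ ht x
              · have h1 := hex x hxS hhx
                have h2 : W.count x ≤ p - 1 := by
                  have := hp.two_le; omega
                simpa [smul_eq_mul] using Nat.mul_le_mul_right (wt ht h x) h2
              · simp [wt, hhx]
          _ ≤ ∑ α ∈ S, (p - 1) * wt ht h α := by
              apply Finset.sum_le_sum_of_subset
              intro x hx
              exact hWS x (List.mem_toFinset.mp hx)
      omega

end Stmt10Aux

/-- Humphreys' insertion lemma: let `S` be a closed set of
positive roots with additive height function `ht`, and `f_α` (`α ∈ S`) root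
vectors in an associative algebra with `f_α^p = 0` and
`[f_α, f_β] ∈ F • f_{α+β}` if `α + β ∈ S`, `[f_α, f_β] = 0` otherwise.
Fix an ordering `L` of `S`, exponents `i(α) ≤ p−1` and `α_k ∈ S` of height `h`
such that `i(α) = p−1` whenever `ht α ≥ h`.  Then inserting the factor
`f_{α_k}` anywhere into the monomial `∏_{α ∈ L} f_α^{i(α)}` yields `0`. -/
theorem stmt_10 {F A V : Type*} [Field F] [Ring A] [Algebra F A]
    [AddCommGroup V] [DecidableEq V]
    {p : ℕ} (hp : p.Prime) [CharP F p]
    (S : Finset V) (f : V → A) (ht : V → ℕ)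
    (hht : ∀ α ∈ S, 0 < ht α)
    (hadd : ∀ α ∈ S, ∀ β ∈ S, α + β ∈ S → ht (α + β) = ht α + ht β)
    (hpow : ∀ α ∈ S, f α ^ p = 0)
    (hbr : ∀ α ∈ S, ∀ β ∈ S,
      (α + β ∈ S → ∃ c : F, f α * f β - f β * f α = c • f (α + β)) ∧
      (α + β ∉ S → f α * f β = f β * f α))
    (L : List V) (hLnd : L.Nodup) (hLS : L.toFinset = S)
    (i : V → ℕ) (hi : ∀ α, i α ≤ p - 1)
    (αk : V) (hαk : αk ∈ S)
    (htop : ∀ α ∈ S, ht αk ≤ ht α → i α = p - 1)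
    (L₁ L₂ : List A)
    (hsplit : (L.map fun α => List.replicate (i α) (f α)).flatten = L₁ ++ L₂) :
    L₁.prod * f αk * L₂.prod = 0 := by
  classical
  open Stmt10Aux in
  set h := ht αk with hh
  -- rewrite the split on the level of `V`-words
  have hWmap : (L.map fun α => List.replicate (i α) (f α)).flatten
      = ((L.map fun α => List.replicate (i α) α).flatten).map f := by
    rw [List.map_flatten, List.map_map]
    congr 1
    apply List.map_congr_left
    intro α _
    simp
  rw [hWmap] at hsplit
  obtain ⟨W0, hW0⟩ : ∃ W0 : List V, (L.map fun α => List.replicate (i α) α).flatten = W0 :=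
    ⟨_, rfl⟩
  rw [hW0] at hsplit
  obtain ⟨W₁, W₂, hW12, hm1, hm2⟩ := List.map_eq_append_iff.mp hsplit
  -- letters of `W0` lie in `S`
  have hW0S : ∀ δ ∈ W0, δ ∈ S := by
    intro δ hδ
    rw [← hW0, List.mem_flatten] at hδ
    obtain ⟨l, hl, hδl⟩ := hδ
    rw [List.mem_map] at hl
    obtain ⟨α, hαL, rfl⟩ := hl
    have := List.eq_of_mem_replicate hδl
    subst this
    rw [← hLS]
    exact List.mem_toFinset.mpr hαL
  -- Phi of `W0` equals `N`
  have hPhiW0 : Phi ht h W0 = ∑ α ∈ S, (p - 1) * wt ht h α := by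
    have e1 : Phi ht h W0 = (L.map fun α => i α * wt ht h α).sum := by
      rw [← hW0]
      unfold Phi
      rw [List.map_flatten, List.sum_flatten, List.map_map, List.map_map]
      congr 1
      apply List.map_congr_left
      intro α _
      simp [Function.comp, List.sum_replicate, smul_eq_mul]
    rw [e1, ← List.sum_toFinset _ hLnd, hLS]
    apply Finset.sum_congr rfl
    intro α hαS
    by_cases hhα : h ≤ ht α
    · rw [htop α hαS hhα]
    · simp [wt, hhα]
  -- the full word
  have hfull : ∀ δ ∈ (W₁ ++ αk :: W₂), δ ∈ S := by
    intro δ hδ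
    rcases List.mem_append.mp hδ with h' | h'
    · exact hW0S δ (by rw [hW12]; exact List.mem_append_left _ h')
    · rcases List.mem_cons.mp h' with h'' | h''
      · exact h'' ▸ hαk
      · exact hW0S δ (by rw [hW12]; exact List.mem_append_right _ h'')
  have hPhifull : (∑ α ∈ S, (p - 1) * wt ht h α) < Phi ht h (W₁ ++ αk :: W₂) := by
    have e2 : Phi ht h (W₁ ++ αk :: W₂) = Phi ht h W0 + wt ht h αk := by
      rw [hW12]
      simp [Phi]
      omega
    have e3 : wt ht h αk = ht αk := by simp [wt, hh]
    have e4 : 0 < ht αk := hht αk hαk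
    omega
  have hz := Stmt10Aux.main hp hht hadd hpow hbr (W₁ ++ αk :: W₂).length
    (W₁ ++ αk :: W₂) le_rfl hfull hPhifull
  rw [← hm1, ← hm2]
  calc (W₁.map f).prod * f αk * (W₂.map f).prod
      = ((W₁ ++ αk :: W₂).map f).prod := by simp [mul_assoc]
    _ = 0 := hz
end

section
/- Let 𝔤 = 𝔰𝔩₂ (or any Lie algebra containing elements e, f_β, f_{β−α} with [e, f_β] = f_{β−α}, [e, f_{β−α}] = 0, [f_{β−α}, f_β] = 0) over a field of characteristic p > 0, and work in an associative algebra where f_{β−α}^p = 0. Then e commutes with f_β^{p−1} f_{β−α}^{p−1}, i.e. [e, f_β^{p−1} f_{β−α}^{p−1}] = 0. -/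
/-- in an associative algebra over a field of characteristic
`p > 0`, if `[e, f_β] = f_{β−α}`, `[e, f_{β−α}] = 0`, `[f_{β−α}, f_β] = 0` and
`f_{β−α}^p = 0`, then `e` commutes with `f_β^{p−1} f_{β−α}^{p−1}`. -/
theorem stmt_11 {F A : Type*} [Field F] [Ring A] [Algebra F A]
    {p : ℕ} [CharP F p] (hp : 0 < p)
    (e fb fc : A)
    (h1 : e * fb - fb * e = fc)
    (h2 : e * fc - fc * e = 0)
    (h3 : fc * fb - fb * fc = 0)
    (h4 : fc ^ p = 0) :
    e * (fb ^ (p - 1) * fc ^ (p - 1)) - (fb ^ (p - 1) * fc ^ (p - 1)) * e = 0 := by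
  have hcomm : Commute fc fb := sub_eq_zero.mp h3
  have hecomm : Commute e fc := sub_eq_zero.mp h2
  have key : ∀ n : ℕ, e * fb ^ (n + 1) - fb ^ (n + 1) * e = (n + 1) • (fc * fb ^ n) := by
    intro n
    induction n with
    | zero => simpa using h1
    | succ n ih =>
      have h5 : fc * fb ^ (n + 1) = fb ^ (n + 1) * fc := (hcomm.pow_right (n + 1)).eq
      have hsplit : e * fb ^ (n + 2) - fb ^ (n + 2) * e
          = (e * fb ^ (n + 1) - fb ^ (n + 1) * e) * fb + fb ^ (n + 1) * (e * fb - fb * e) := by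
        rw [pow_succ _ (n+1)]; noncomm_ring
      rw [hsplit, ih, h1, smul_mul_assoc, mul_assoc, ← pow_succ]
      calc (n + 1) • (fc * fb ^ (n + 1)) + fb ^ (n + 1) * fc
          = (n + 1) • (fc * fb ^ (n + 1)) + fc * fb ^ (n + 1) := by rw [h5]
        _ = (n + 1 + 1) • (fc * fb ^ (n + 1)) := (succ_nsmul _ _).symm
  obtain ⟨m, rfl⟩ : ∃ m, p = m + 1 := ⟨p - 1, (Nat.succ_pred_eq_of_pos hp).symm⟩
  simp only [Nat.add_sub_cancel]
  cases m with
  | zero => simp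
  | succ k =>
    have hec : e * fc ^ (k + 1) = fc ^ (k + 1) * e := (hecomm.pow_right (k + 1)).eq
    have hsplit : e * (fb ^ (k + 1) * fc ^ (k + 1)) - fb ^ (k + 1) * fc ^ (k + 1) * e
        = (e * fb ^ (k + 1) - fb ^ (k + 1) * e) * fc ^ (k + 1)
          + fb ^ (k + 1) * (e * fc ^ (k + 1) - fc ^ (k + 1) * e) := by noncomm_ring
    rw [hsplit, hec, sub_self, mul_zero, add_zero, key, smul_mul_assoc]
    have : fc * fb ^ k * fc ^ (k + 1) = fb ^ k * fc ^ (k + 1 + 1) := by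
      rw [(hcomm.pow_right k).eq, mul_assoc, ← pow_succ']
    rw [this, h4, mul_zero, smul_zero]
end

section
/- Let p > 3 and work in an associative 𝔽-algebra (char 𝔽 = p) containing elements e, f₁, f₂, f₃ with relations [e, f₁] = 0, [e, f₂] = f₃ (up to nonzero scalar), [e, f₃] = 0, [f₃, f₂] = f₁ (up to nonzero scalar), [f₂, f₁] = 0, [f₃, f₁] = 0, and f₁^p = f₂^p = f₃^p = 0. Then [e, f₁^{p−1} f₂^{p−1} f₃^{p−1}] = 0. -/
/-- in an associative algebra over a field of characteristic
`p > 3`, given elements `e, f₁, f₂, f₃` with `[e,f₁] = 0`, `[e,f₂] = c₁•f₃`,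
`[e,f₃] = 0`, `[f₃,f₂] = c₂•f₁`, `[f₂,f₁] = 0`, `[f₃,f₁] = 0` (with `c₁, c₂`
nonzero scalars) and `f₁^p = f₂^p = f₃^p = 0`, one has
`[e, f₁^{p−1} f₂^{p−1} f₃^{p−1}] = 0`. -/
theorem stmt_12 {F A : Type*} [Field F] [Ring A] [Algebra F A]
    {p : ℕ} [CharP F p] (hp : 3 < p)
    (e f1 f2 f3 : A) (c1 c2 : F) (hc1 : c1 ≠ 0) (hc2 : c2 ≠ 0)
    (h1 : e * f1 - f1 * e = 0)
    (h2 : e * f2 - f2 * e = c1 • f3)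
    (h3 : e * f3 - f3 * e = 0)
    (h4 : f3 * f2 - f2 * f3 = c2 • f1)
    (h5 : f2 * f1 - f1 * f2 = 0)
    (h6 : f3 * f1 - f1 * f3 = 0)
    (hp1 : f1 ^ p = 0) (hp2 : f2 ^ p = 0) (hp3 : f3 ^ p = 0) :
    e * (f1 ^ (p - 1) * f2 ^ (p - 1) * f3 ^ (p - 1)) -
      (f1 ^ (p - 1) * f2 ^ (p - 1) * f3 ^ (p - 1)) * e = 0 := by
  have ce1 : Commute e f1 := sub_eq_zero.mp h1
  have ce3 : Commute e f3 := sub_eq_zero.mp h3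
  have c21 : Commute f2 f1 := sub_eq_zero.mp h5
  have h5' : f1 * f2 = f2 * f1 := c21.symm
  have h5g : ∀ x : A, f1 * (f2 * x) = f2 * (f1 * x) := by
    intro x; rw [← mul_assoc, h5', mul_assoc]
  have h4' : f3 * f2 = f2 * f3 + c2 • f1 := sub_eq_iff_eq_add'.mp h4
  have h4g : ∀ x : A, f3 * (f2 * x) = f2 * (f3 * x) + c2 • (f1 * x) := by
    intro x; rw [← mul_assoc, h4', add_mul, smul_mul_assoc, mul_assoc]
  have pw : ∀ (k : ℕ) (x : A), f2 ^ k * (f2 * x) = f2 ^ (k + 1) * x := by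
    intro k x; rw [← mul_assoc, ← pow_succ]
  -- L3 : move f3 past powers of f2
  have L3 : ∀ n : ℕ, ∃ b : F,
      f3 * f2 ^ (n + 1) - f2 ^ (n + 1) * f3 = b • (f2 ^ n * f1) := by
    intro n
    induction n with
    | zero =>
      exact ⟨c2, by simpa using h4⟩
    | succ n ih =>
      obtain ⟨b, hb⟩ := ih
      refine ⟨b + c2, ?_⟩
      have key : f3 * f2 ^ (n + 2) - f2 ^ (n + 2) * f3
          = (f3 * f2 ^ (n + 1) - f2 ^ (n + 1) * f3) * f2
            + f2 ^ (n + 1) * (f3 * f2 - f2 * f3) := by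
        have h : f2 ^ (n + 2) = f2 ^ (n + 1) * f2 := by rw [pow_succ]
        rw [h]; noncomm_ring
      rw [key, hb, h4, smul_mul_assoc, mul_assoc, h5', ← mul_assoc,
        ← pow_succ, mul_smul_comm]
      module
  -- L2 : commutator of e with powers of f2
  have L2 : ∀ n : ℕ, ∃ a b : F,
      e * f2 ^ (n + 2) - f2 ^ (n + 2) * e
        = a • (f2 ^ (n + 1) * f3) + b • (f2 ^ n * f1) := by
    intro n
    induction n with
    | zero =>
      refine ⟨c1 + c1, c1 * c2, ?_⟩
      have key : e * f2 ^ 2 - f2 ^ 2 * e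
          = (e * f2 - f2 * e) * f2 + f2 * (e * f2 - f2 * e) := by
        have h : f2 ^ 2 = f2 * f2 := sq f2
        rw [h]; noncomm_ring
      rw [key, h2, smul_mul_assoc, h4']
      simp only [zero_add, pow_one, pow_zero, one_mul, smul_add, smul_smul,
        mul_smul_comm]
      module
    | succ n ih =>
      obtain ⟨a, b, hab⟩ := ih
      refine ⟨a + c1, a * c2 + b, ?_⟩
      have key : e * f2 ^ (n + 3) - f2 ^ (n + 3) * e
          = (e * f2 ^ (n + 2) - f2 ^ (n + 2) * e) * f2
            + f2 ^ (n + 2) * (e * f2 - f2 * e) := by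
        have h : f2 ^ (n + 3) = f2 ^ (n + 2) * f2 := by rw [pow_succ]
        rw [h]; noncomm_ring
      rw [key, hab, h2, add_mul, smul_mul_assoc, smul_mul_assoc,
        mul_assoc, h4', mul_assoc, h5']
      simp only [mul_add, mul_smul_comm, pw, smul_add, smul_smul,
        show n + 1 + 1 = n + 2 from rfl, show n + 2 + 1 = n + 3 from rfl]
      module
  -- assemble
  obtain ⟨a, b, hab⟩ := L2 (p - 3)
  rw [show p - 3 + 2 = p - 1 from by omega] at hab
  have hcq1 : e * f1 ^ (p - 1) = f1 ^ (p - 1) * e := (ce1.pow_right _).eq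
  have hcq3 : e * f3 ^ (p - 1) = f3 ^ (p - 1) * e := (ce3.pow_right _).eq
  have t1 : e * (f1 ^ (p - 1) * f2 ^ (p - 1) * f3 ^ (p - 1))
      = f1 ^ (p - 1) * (e * f2 ^ (p - 1)) * f3 ^ (p - 1) := by
    rw [← mul_assoc e, ← mul_assoc e, hcq1, mul_assoc (f1 ^ (p - 1))]
  have t2 : (f1 ^ (p - 1) * f2 ^ (p - 1) * f3 ^ (p - 1)) * e
      = f1 ^ (p - 1) * (f2 ^ (p - 1) * e) * f3 ^ (p - 1) := by
    rw [mul_assoc, ← hcq3, ← mul_assoc, mul_assoc (f1 ^ (p - 1))]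
  have main : e * (f1 ^ (p - 1) * f2 ^ (p - 1) * f3 ^ (p - 1)) -
      (f1 ^ (p - 1) * f2 ^ (p - 1) * f3 ^ (p - 1)) * e
      = f1 ^ (p - 1) * ((e * f2 ^ (p - 1) - f2 ^ (p - 1) * e) * f3 ^ (p - 1)) := by
    rw [t1, t2]; noncomm_ring
  have Z1 : f3 * f3 ^ (p - 1) = 0 := by
    rw [← pow_succ', show p - 1 + 1 = p from by omega, hp3]
  have Z2 : f2 ^ (p - 3) * (f1 * f3 ^ (p - 1)) = f1 * (f2 ^ (p - 3) * f3 ^ (p - 1)) := by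
    rw [← mul_assoc, (c21.pow_left _).eq, mul_assoc]
  have Z3 : ∀ y : A, f1 ^ (p - 1) * (f1 * y) = 0 := by
    intro y
    rw [← mul_assoc, ← pow_succ, show p - 1 + 1 = p from by omega, hp1, zero_mul]
  rw [main, hab]
  simp only [add_mul, smul_mul_assoc, mul_add, mul_smul_comm, mul_assoc,
    Z1, mul_zero, smul_zero, zero_add, add_zero, Z2, Z3]
end
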